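/- For every BDM state s ∈ S there is exactly one finite path of feasible transitions s = u_0 → u_1 → ⋯ → u_k = s_0 whose actions all lie in {D, N_=, N_<, d_−, b_+} (i.e., which avoids actions of type I) and which visits the initial state s_0 only as its final state. -/

import Mathlib

open scoped Classical ENNReal
open Filter

namespace BDM

/-- Augmented BDM state set `S̄`: batteries `b 1, …, b M` (entries outside `{1,…,M}`
are fixed to `0`), drain `d`, time residue `T`, ministep `t ∈ {1,…,M+1}`, and the
invariant `d + T + ∑ b_m = 0`. -/
structure St (M : ℕ) where
  b : ℕ → ℤ
  d : ℤ
  T : ℤ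
  t : ℕ
  ht1 : 1 ≤ t
  ht2 : t ≤ M + 1
  hb0 : ∀ m, m = 0 ∨ M < m → b m = 0
  inv : d + T + ∑ m ∈ Finset.range M, b (m + 1) = 0

/-- Membership in the (restricted) state set `S`: `0 ≤ T ≤ M`. -/
def inS {M : ℕ} (s : St M) : Prop := 0 ≤ s.T ∧ s.T ≤ (M : ℤ)

/-- The initial state `s₀ = (0,…,0,0;0,M+1)`. -/
def init (M : ℕ) : St M where
  b := fun _ => 0
  d := 0
  T := 0
  t := M + 1
  ht1 := Nat.le_add_left 1 M
  ht2 := le_refl _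
  hb0 := fun _ _ => rfl
  inv := by simp

/-- The six actions of the BDM. -/
inductive Act : Type
  | D | I | Ne | Nl | dm | bp
deriving DecidableEq

/-- Feasible transitions of the BDM. -/
def Step {M : ℕ} (s : St M) : Act → St M → Prop
  | .D, s' => s.t ≤ M ∧ s.d < s.b s.t ∧ s'.t = s.t + 1 ∧ s'.T = s.T ∧
      s'.d = s.b s.t ∧ s'.b = Function.update s.b s.t s.d
  | .I, s' => s.t ≤ M ∧ s.d < s.b s.t ∧ s'.t = s.t + 1 ∧ s'.T = s.T ∧
      s'.d = s.d ∧ s'.b = s.b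
  | .Ne, s' => s.t ≤ M ∧ s.b s.t = s.d ∧ s'.t = s.t + 1 ∧ s'.T = s.T ∧
      s'.d = s.d ∧ s'.b = s.b
  | .Nl, s' => s.t ≤ M ∧ s.b s.t < s.d ∧ s'.t = s.t + 1 ∧ s'.T = s.T ∧
      s'.d = s.d ∧ s'.b = s.b
  | .dm, s' => s.t = M + 1 ∧ s.T < M ∧ s'.t = 1 ∧ s'.T = s.T + 1 ∧
      s'.d = s.d - 1 ∧ s'.b = s.b
  | .bp, s' => s.t = M + 1 ∧ s.T = M ∧ s'.t = 1 ∧ s'.T = 0 ∧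
      s'.d = s.d ∧ s'.b = fun m => if 1 ≤ m ∧ m ≤ M then s.b m + 1 else 0

/-- The `(M+1)`-tuple `(b_1,…,b_{t−1},d,b_t,…,b_M)` as a list. -/
def tuple {M : ℕ} (s : St M) : List ℤ :=
  ((List.range M).map (fun m => s.b (m + 1))).insertIdx (s.t - 1) s.d

/-- One transposition of adjacent entries of a list. -/
def AdjSwap (l l' : List ℤ) : Prop :=
  ∃ l₁ x y l₂, l = l₁ ++ x :: y :: l₂ ∧ l' = l₁ ++ y :: x :: l₂

/-- The set of numbers `n` such that `l` can be sorted into nonincreasing order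
by `n` transpositions of adjacent entries. -/
def SortCost (l : List ℤ) : Set ℕ :=
  {n | ∃ f : ℕ → List ℤ, f 0 = l ∧ (∀ i < n, AdjSwap (f i) (f (i + 1))) ∧
        (f n).Pairwise (· ≥ ·)}

/-- `π_l`: the minimal number of adjacent transpositions needed to sort `l`
into nonincreasing order. -/
noncomputable def piMin (l : List ℤ) : ℕ := sInf (SortCost l)

/-- The nonincreasing rearrangement of a list. -/
def sortedTuple (l : List ℤ) : List ℤ := l.insertionSort (· ≥ ·)

/-- The class `K(s) = −π_s + M·T + 2·∑_{m=1}^{M+1} b̃_m·(M+1−m)`. -/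
noncomputable def Kc {M : ℕ} (s : St M) : ℤ :=
  -(piMin (tuple s) : ℤ) + (M : ℤ) * s.T +
    2 * ∑ i ∈ Finset.range (M + 1), (sortedTuple (tuple s)).getD i 0 * ((M : ℤ) - i)

/-- The transition matrix `𝒯(s,s')` of the BDM, with values in `ℝ≥0∞`. -/
noncomputable def Tmat (M q : ℕ) (s s' : St M) : ℝ≥0∞ :=
  if Step s .D s' then ((q : ℝ≥0∞) - 1) / q
  else if Step s .I s' then 1 / q
  else if (Step s .Ne s' ∨ Step s .Nl s' ∨ Step s .dm s' ∨ Step s .bp s') then 1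
  else 0

/-- The state set `S` as a subtype. -/
def SS (M : ℕ) : Type := {s : St M // inS s}

/-- The mass distributions `μ_τ` on `S`: `μ_0` is the point mass at `s₀` and
`μ_{τ+1}(s') = ∑_{s∈S} 𝒯(s,s')·μ_τ(s)`. -/
noncomputable def mu (M q : ℕ) : ℕ → SS M → ℝ≥0∞
  | 0, s => if s.1 = init M then 1 else 0
  | τ + 1, s' => ∑' s : SS M, Tmat M q s.1 s'.1 * mu M q τ s

/-- The asymptotic measure `μ_∞(s) = limsup_{τ→∞} μ_τ(s)`. -/
noncomputable def muInf (M q : ℕ) (s : SS M) : ℝ≥0∞ :=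
  Filter.atTop.limsup (fun τ => mu M q τ s)

end BDM

namespace BDM

/-- `Chain s L s'`: the list of actions `L` gives a finite path of feasible
transitions from `s` to `s'`. -/
inductive Chain {M : ℕ} : St M → List Act → St M → Prop
  | nil (s : St M) : Chain s [] s
  | cons {s u s' : St M} {α : Act} {L : List Act} :
      Step s α u → Chain u L s' → Chain s (α :: L) s'

end BDM

namespace BDM

variable {M : ℕ}

lemma sum_update_g (g : ℤ → ℤ) (b : ℕ → ℤ) (t : ℕ) (ht1 : 1 ≤ t) (ht : t ≤ M) (d : ℤ) :
    ∑ m ∈ Finset.range M, g ((Function.update b t d) (m+1)) =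
      (∑ m ∈ Finset.range M, g (b (m+1))) - g (b t) + g d := by
  have hk : t - 1 ∈ Finset.range M := by simp; omega
  have hsucc : t - 1 + 1 = t := by omega
  have h1 := (Finset.add_sum_erase (Finset.range M)
      (fun m => g ((Function.update b t d) (m+1))) hk).symm
  have h2 := (Finset.add_sum_erase (Finset.range M) (fun m => g (b (m+1))) hk).symm
  have h3 : ∑ m ∈ (Finset.range M).erase (t-1), g ((Function.update b t d) (m+1)) =
      ∑ m ∈ (Finset.range M).erase (t-1), g (b (m+1)) := by
    refine Finset.sum_congr rfl fun m hm => ?_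
    have hm' := Finset.mem_erase.1 hm
    rw [Function.update_of_ne (by omega)]
  rw [h1, h2, h3, hsucc, Function.update_self]
  ring

/-- The deterministic non-`I` successor. -/
def nxt (s : St M) : St M :=
  if h : s.t ≤ M then
    if h2 : s.d < s.b s.t then
      { b := Function.update s.b s.t s.d
        d := s.b s.t
        T := s.T
        t := s.t + 1
        ht1 := by omega
        ht2 := by omega
        hb0 := by
          intro m hm
          have h1 := s.ht1
          rw [Function.update_of_ne (by omega)]
          exact s.hb0 m hm
        inv := by
          have h1 := s.ht1
          have := sum_update_g id s.b s.t h1 h s.d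
          simp only [id] at this
          rw [this]
          have := s.inv
          ring_nf
          ring_nf at this
          linarith }
    else
      { b := s.b, d := s.d, T := s.T, t := s.t + 1
        ht1 := by omega, ht2 := by omega, hb0 := s.hb0, inv := s.inv }
  else if hT : s.T = (M : ℤ) then
    { b := fun m => if 1 ≤ m ∧ m ≤ M then s.b m + 1 else 0
      d := s.d
      T := 0
      t := 1
      ht1 := le_refl 1
      ht2 := by omega
      hb0 := by intro m hm; rw [if_neg]; omega
      inv := by
        have hsum : ∑ m ∈ Finset.range M,
            (if 1 ≤ m + 1 ∧ m + 1 ≤ M then s.b (m+1) + 1 else 0) =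
            (∑ m ∈ Finset.range M, s.b (m+1)) + M := by
          have : ∀ m ∈ Finset.range M,
              (if 1 ≤ m + 1 ∧ m + 1 ≤ M then s.b (m+1) + 1 else 0) = s.b (m+1) + 1 := by
            intro m hm
            rw [if_pos]
            have := Finset.mem_range.1 hm; omega
          rw [Finset.sum_congr rfl this, Finset.sum_add_distrib]
          simp
        simp only [hsum]
        have := s.inv
        rw [hT] at this
        linarith }
  else
    { b := s.b, d := s.d - 1, T := s.T + 1, t := 1
      ht1 := le_refl 1, ht2 := by omega, hb0 := s.hb0
      inv := by have := s.inv; linarith }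

/-- The action taken by `nxt`. -/
def actOf (s : St M) : Act :=
  if s.t ≤ M then
    (if s.d < s.b s.t then .D else if s.b s.t = s.d then .Ne else .Nl)
  else if s.T = (M : ℤ) then .bp else .dm

lemma actOf_ne_I (s : St M) : actOf s ≠ .I := by
  unfold actOf; split_ifs <;> simp

lemma st_ext {s s' : St M} (hb : s.b = s'.b) (hd : s.d = s'.d)
    (hT : s.T = s'.T) (ht : s.t = s'.t) : s = s' := by
  cases s; cases s'
  simp only at hb hd hT ht
  subst hb; subst hd; subst hT; subst ht
  rfl

end BDM

namespace BDM

variable {M : ℕ}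

/-- Prefix-domination invariant. -/
def PInv (s : St M) : Prop := ∀ j, 1 ≤ j → j < s.t → s.b j ≤ s.d

lemma pinv_of_t1 {s : St M} (h : s.t = 1) : PInv s := by
  intro j h1 h2; omega

lemma step_actOf (s : St M) (hs : inS s) : Step s (actOf s) (nxt s) := by
  by_cases h : s.t ≤ M
  · by_cases h2 : s.d < s.b s.t
    · have ha : actOf s = .D := by simp [actOf, h, h2]
      rw [ha]
      refine ⟨h, h2, ?_⟩
      simp [nxt, h, h2]
    · by_cases h3 : s.b s.t = s.d
      · have ha : actOf s = .Ne := by simp [actOf, h, h2, h3]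
        rw [ha]
        refine ⟨h, h3, ?_⟩
        simp [nxt, h, h2]
      · have h4 : s.b s.t < s.d := by omega
        have ha : actOf s = .Nl := by simp [actOf, h, h2, h3]
        rw [ha]
        refine ⟨h, h4, ?_⟩
        simp [nxt, h, h2]
  · have ht : s.t = M + 1 := by have := s.ht2; omega
    by_cases hT : s.T = (M : ℤ)
    · have ha : actOf s = .bp := by simp [actOf, h, hT]
      rw [ha]
      refine ⟨ht, hT, ?_⟩
      simp [nxt, h, hT]
    · have ha : actOf s = .dm := by simp [actOf, h, hT]
      rw [ha]
      have hTlt : s.T < (M : ℤ) := lt_of_le_of_ne hs.2 hT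
      refine ⟨ht, hTlt, ?_⟩
      simp [nxt, h, hT]

lemma step_det {s u : St M} {α : Act} (h : Step s α u) (hα : α ≠ .I) :
    α = actOf s ∧ u = nxt s := by
  cases α with
  | I => exact absurd rfl hα
  | D =>
    obtain ⟨h1, h2, h3, h4, h5, h6⟩ := h
    constructor
    · simp [actOf, h1, h2]
    · exact st_ext (by simp [nxt, h1, h2, h6]) (by simp [nxt, h1, h2, h5])
        (by simp [nxt, h1, h2, h4]) (by simp [nxt, h1, h2, h3])
  | Ne =>
    obtain ⟨h1, h2, h3, h4, h5, h6⟩ := h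
    have h2' : ¬ s.d < s.b s.t := by omega
    constructor
    · simp [actOf, h1, h2, h2']
    · exact st_ext (by simp [nxt, h1, h2', h6]) (by simp [nxt, h1, h2', h5])
        (by simp [nxt, h1, h2', h4]) (by simp [nxt, h1, h2', h3])
  | Nl =>
    obtain ⟨h1, h2, h3, h4, h5, h6⟩ := h
    have h2' : ¬ s.d < s.b s.t := by omega
    have h2'' : ¬ s.b s.t = s.d := by omega
    constructor
    · simp [actOf, h1, h2', h2'']
    · exact st_ext (by simp [nxt, h1, h2', h6]) (by simp [nxt, h1, h2', h5])
        (by simp [nxt, h1, h2', h4]) (by simp [nxt, h1, h2', h3])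
  | dm =>
    obtain ⟨h1, h2, h3, h4, h5, h6⟩ := h
    have h1' : ¬ s.t ≤ M := by omega
    have hT : ¬ s.T = (M : ℤ) := by omega
    constructor
    · simp [actOf, h1', hT]
    · exact st_ext (by simp [nxt, h1', hT, h6]) (by simp [nxt, h1', hT, h5])
        (by simp [nxt, h1', hT, h4]) (by simp [nxt, h1', hT, h3])
  | bp =>
    obtain ⟨h1, h2, h3, h4, h5, h6⟩ := h
    have h1' : ¬ s.t ≤ M := by omega
    constructor
    · simp [actOf, h1', h2]
    · exact st_ext (by simp [nxt, h1', h2, h6]) (by simp [nxt, h1', h2, h5])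
        (by simp [nxt, h1', h2, h4]) (by simp [nxt, h1', h2, h3])

lemma inS_nxt {s : St M} (hs : inS s) : inS (nxt s) := by
  unfold nxt
  split_ifs with h h2 hT
  · exact hs
  · exact hs
  · exact ⟨le_refl 0, by positivity⟩
  · have h' : s.T < (M : ℤ) := lt_of_le_of_ne hs.2 hT
    show (0:ℤ) ≤ s.T + 1 ∧ s.T + 1 ≤ (M:ℤ)
    exact ⟨by linarith [hs.1], by omega⟩

lemma pinv_nxt {s : St M} (hI : PInv s) : PInv (nxt s) := by
  unfold nxt
  split_ifs with h h2 hT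
  · intro j h1 hj
    simp only [] at hj ⊢
    rcases eq_or_ne j s.t with rfl | hne
    · rw [Function.update_self]; omega
    · rw [Function.update_of_ne hne]
      exact le_of_lt (lt_of_le_of_lt (hI j h1 (by omega)) h2)
  · intro j h1 hj
    simp only [] at hj ⊢
    rcases eq_or_ne j s.t with rfl | hne
    · omega
    · exact hI j h1 (by omega)
  · intro j h1 hj; simp only [] at hj; omega
  · intro j h1 hj; simp only [] at hj; omega

end BDM

namespace BDM

variable {M : ℕ}

/-- The potential `Σ x(x+1)` over all batteries and the drain. -/
def Phi (s : St M) : ℤ :=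
  (∑ m ∈ Finset.range M, s.b (m+1) * (s.b (m+1) + 1)) + s.d * (s.d + 1)

lemma sq_succ_nonneg (x : ℤ) : 0 ≤ x * (x + 1) := by
  rcases le_or_gt 0 x with h | h
  · positivity
  · nlinarith

lemma phi_nonneg (s : St M) : 0 ≤ Phi s :=
  add_nonneg (Finset.sum_nonneg fun m _ => sq_succ_nonneg _) (sq_succ_nonneg _)

lemma d_nonneg {s : St M} (hs : inS s) (hI : PInv s) (ht : ¬ s.t ≤ M) : 0 ≤ s.d := by
  have ht' : s.t = M + 1 := by have := s.ht2; omega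
  have hb : ∀ m ∈ Finset.range M, s.b (m+1) ≤ s.d := by
    intro m hm
    exact hI (m+1) (by omega) (by have := Finset.mem_range.1 hm; omega)
  have hsum : ∑ m ∈ Finset.range M, s.b (m+1) ≤ (M : ℤ) * s.d := by
    calc ∑ m ∈ Finset.range M, s.b (m+1) ≤ ∑ _m ∈ Finset.range M, s.d :=
          Finset.sum_le_sum hb
      _ = (M : ℤ) * s.d := by simp [mul_comm]
  have hinv := s.inv
  have hT := hs.2
  nlinarith [hs.1]

/-- At a `t ≤ M` ministep the potential is unchanged. -/
lemma phi_nxt_eq {s : St M} (h : s.t ≤ M) : Phi (nxt s) = Phi s := by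
  unfold nxt
  split_ifs with h2
  · unfold Phi
    simp only []
    have := sum_update_g (fun x => x * (x + 1)) s.b s.t s.ht1 h s.d
    rw [this]
    ring
  · rfl

/-- At a `t = M+1` step the potential changes by `−2d`. -/
lemma phi_nxt_macro {s : St M} (h : ¬ s.t ≤ M) : Phi (nxt s) = Phi s - 2 * s.d := by
  unfold nxt
  split_ifs with hT
  · unfold Phi
    simp only []
    have hcong : ∀ m ∈ Finset.range M,
        (if 1 ≤ m + 1 ∧ m + 1 ≤ M then s.b (m+1) + 1 else 0) *
          ((if 1 ≤ m + 1 ∧ m + 1 ≤ M then s.b (m+1) + 1 else 0) + 1) =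
        s.b (m+1) * (s.b (m+1) + 1) + 2 * s.b (m+1) + 2 := by
      intro m hm
      rw [if_pos (by have := Finset.mem_range.1 hm; omega)]
      ring
    rw [Finset.sum_congr rfl hcong]
    have hsplit : ∑ m ∈ Finset.range M,
        (s.b (m+1) * (s.b (m+1) + 1) + 2 * s.b (m+1) + 2) =
        (∑ m ∈ Finset.range M, s.b (m+1) * (s.b (m+1) + 1)) +
          2 * (∑ m ∈ Finset.range M, s.b (m+1)) + 2 * M := by
      rw [Finset.sum_add_distrib, Finset.sum_add_distrib, ← Finset.mul_sum]
      simp [mul_comm]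
    rw [hsplit]
    have hinv := s.inv
    rw [hT] at hinv
    linarith
  · unfold Phi
    simp only []
    ring

lemma phi_nxt_le {s : St M} (hs : inS s) (hI : PInv s) : Phi (nxt s) ≤ Phi s := by
  by_cases h : s.t ≤ M
  · exact le_of_eq (phi_nxt_eq h)
  · rw [phi_nxt_macro h]
    have := d_nonneg hs hI h
    linarith

lemma inS_iter {s : St M} (hs : inS s) : ∀ k, inS (nxt^[k] s) := by
  intro k
  induction k with
  | zero => exact hs
  | succ k ih => rw [Function.iterate_succ_apply']; exact inS_nxt ih

lemma pinv_iter {s : St M} (hI : PInv s) : ∀ k, PInv (nxt^[k] s) := by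
  intro k
  induction k with
  | zero => exact hI
  | succ k ih => rw [Function.iterate_succ_apply']; exact pinv_nxt ih

lemma phi_iter_le {s : St M} (hs : inS s) (hI : PInv s) :
    ∀ k, Phi (nxt^[k] s) ≤ Phi s := by
  intro k
  induction k with
  | zero => exact le_refl _
  | succ k ih =>
    rw [Function.iterate_succ_apply']
    exact le_trans (phi_nxt_le (inS_iter hs k) (pinv_iter hI k)) ih


end BDM

namespace BDM

variable {M : ℕ}

lemma nxt_fields_mini {s : St M} (h : s.t ≤ M) :
    (nxt s).t = s.t + 1 ∧ (nxt s).T = s.T := by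
  unfold nxt; split_ifs <;> exact ⟨rfl, rfl⟩

lemma nxt_t_macro {s : St M} (h : ¬ s.t ≤ M) : (nxt s).t = 1 := by
  unfold nxt; split_ifs <;> rfl

lemma nxt_fields_bp {s : St M} (h : ¬ s.t ≤ M) (hT : s.T = (M : ℤ)) :
    (nxt s).T = 0 := by
  unfold nxt; split_ifs; rfl

lemma nxt_fields_dm {s : St M} (h : ¬ s.t ≤ M) (hT : ¬ s.T = (M : ℤ)) :
    (nxt s).T = s.T + 1 ∧ (nxt s).d = s.d - 1 := by
  unfold nxt; split_ifs; exact ⟨rfl, rfl⟩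

lemma iter_sweep : ∀ (j : ℕ) (s : St M), s.t + j ≤ M + 1 →
    (nxt^[j] s).t = s.t + j ∧ (nxt^[j] s).T = s.T := by
  intro j
  induction j with
  | zero => intro s _; simp
  | succ j ih =>
    intro s hj
    have h : s.t ≤ M := by omega
    obtain ⟨h1, h2⟩ := nxt_fields_mini h
    rw [Function.iterate_succ_apply]
    obtain ⟨h3, h4⟩ := ih (nxt s) (by omega)
    refine ⟨by omega, by rw [h4, h2]⟩

/-- From any `t = 1` state one reaches a `T = 0` checkpoint `t = M+1`. -/
lemma reach_cp : ∀ (n : ℕ) (s : St M), inS s → s.t = 1 → ((M : ℤ) - s.T).toNat ≤ n →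
    ∃ k, (nxt^[k] s).t = M + 1 ∧ (nxt^[k] s).T = 0 := by
  intro n
  induction n with
  | zero =>
    intro s hs ht hn
    have hT : s.T = (M : ℤ) := by have := hs.1; have := hs.2; omega
    -- sweep, then bp, then sweep
    obtain ⟨h1, h2⟩ := iter_sweep M s (by omega)
    set u := nxt^[M] s with hu
    have hu1 : ¬ u.t ≤ M := by omega
    have hu2 : u.T = (M : ℤ) := by rw [h2, hT]
    have hv1 : (nxt u).t = 1 := nxt_t_macro hu1
    have hv2 : (nxt u).T = 0 := nxt_fields_bp hu1 hu2
    obtain ⟨h3, h4⟩ := iter_sweep M (nxt u) (by omega)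
    refine ⟨M + (1 + M), ?_, ?_⟩
    · rw [Function.iterate_add_apply, Function.iterate_add_apply, ← hu]
      simp only [Function.iterate_one]
      omega
    · rw [Function.iterate_add_apply, Function.iterate_add_apply, ← hu]
      simp only [Function.iterate_one]
      rw [h4, hv2]
  | succ n ih =>
    intro s hs ht hn
    obtain ⟨h1, h2⟩ := iter_sweep M s (by omega)
    by_cases h0 : s.T = 0
    · exact ⟨M, by omega, by rw [h2, h0]⟩
    · set u := nxt^[M] s with hu
      have hu1 : ¬ u.t ≤ M := by omega
      by_cases hT : u.T = (M : ℤ)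
      · have hv1 : (nxt u).t = 1 := nxt_t_macro hu1
        have hv2 : (nxt u).T = 0 := nxt_fields_bp hu1 hT
        obtain ⟨h3, h4⟩ := iter_sweep M (nxt u) (by omega)
        refine ⟨M + (1 + M), ?_, ?_⟩
        · rw [Function.iterate_add_apply, Function.iterate_add_apply, ← hu]
          simp only [Function.iterate_one]
          omega
        · rw [Function.iterate_add_apply, Function.iterate_add_apply, ← hu]
          simp only [Function.iterate_one]
          rw [h4, hv2]
      · have hv1 : (nxt u).t = 1 := nxt_t_macro hu1
        obtain ⟨hv2, _⟩ := nxt_fields_dm hu1 hT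
        have hus : inS u := inS_iter hs M
        have hvs : inS (nxt u) := inS_nxt hus
        have hn' : ((M : ℤ) - (nxt u).T).toNat ≤ n := by
          rw [hv2, h2]
          have := hus.2
          have := hs.1
          have h2' : u.T = s.T := h2
          omega
        obtain ⟨k, hk1, hk2⟩ := ih (nxt u) hvs hv1 hn'
        refine ⟨k + (1 + M), ?_, ?_⟩
        · rw [Function.iterate_add_apply, Function.iterate_add_apply, ← hu]
          simpa using hk1
        · rw [Function.iterate_add_apply, Function.iterate_add_apply, ← hu]
          simpa using hk2

/-- A `T = 0` checkpoint with `d = 0` is `init`. -/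
lemma cp_eq_init {s : St M} (hI : PInv s) (ht : s.t = M + 1) (hT : s.T = 0)
    (hd : s.d = 0) : s = init M := by
  have hb : ∀ m ∈ Finset.range M, s.b (m+1) ≤ 0 := by
    intro m hm
    have := hI (m+1) (by omega) (by have := Finset.mem_range.1 hm; omega)
    omega
  have hsum : ∑ m ∈ Finset.range M, s.b (m+1) = 0 := by
    have := s.inv; rw [hT, hd] at this; linarith
  have hz : ∀ m ∈ Finset.range M, s.b (m+1) = 0 := by
    intro m hm
    by_contra hne
    have hlt : s.b (m+1) < 0 := lt_of_le_of_ne (hb m hm) hne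
    have : ∑ m ∈ Finset.range M, s.b (m+1) < 0 := by
      calc ∑ k ∈ Finset.range M, s.b (k+1)
          ≤ s.b (m+1) + ∑ k ∈ (Finset.range M).erase m, (0:ℤ) := by
            rw [← Finset.add_sum_erase _ _ hm]
            gcongr with k hk
            exact hb k (Finset.mem_of_mem_erase hk)
        _ < 0 := by simp [hlt]
    omega
  refine st_ext ?_ hd hT ht
  funext m
  show s.b m = 0
  rcases Nat.lt_or_ge m 1 with h | h
  · exact s.hb0 m (Or.inl (by omega))
  · rcases Nat.lt_or_ge M m with h' | h'
    · exact s.hb0 m (Or.inr h')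
    · have : m - 1 ∈ Finset.range M := by simp; omega
      have := hz (m-1) this
      rwa [Nat.sub_add_cancel h] at this

/-- Main lemma: every `T = 0` checkpoint reaches `init`. -/
lemma cp_reaches_init : ∀ (v : ℕ) (s : St M), inS s → PInv s →
    s.t = M + 1 → s.T = 0 → (Phi s).toNat ≤ v → ∃ n, nxt^[n] s = init M := by
  intro v
  induction v with
  | zero =>
    intro s hs hI ht hT hv
    have hd := d_nonneg hs hI (by omega)
    rcases eq_or_lt_of_le hd with hd0 | hdpos
    · exact ⟨0, cp_eq_init hI ht hT hd0.symm⟩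
    · exfalso
      have h1 : 2 ≤ s.d * (s.d + 1) := by nlinarith
      have h2 : 0 ≤ ∑ m ∈ Finset.range M, s.b (m+1) * (s.b (m+1) + 1) :=
        Finset.sum_nonneg fun m _ => sq_succ_nonneg _
      have : 2 ≤ Phi s := by unfold Phi; linarith
      omega
  | succ v ih =>
    intro s hs hI ht hT hv
    have hd := d_nonneg hs hI (by omega)
    rcases eq_or_lt_of_le hd with hd0 | hdpos
    · exact ⟨0, cp_eq_init hI ht hT hd0.symm⟩
    · -- do one macro step; Phi drops by 2d ≥ 2
      have hgt : ¬ s.t ≤ M := by omega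
      have hphi1 : Phi (nxt s) = Phi s - 2 * s.d := phi_nxt_macro hgt
      have hs1 : inS (nxt s) := inS_nxt hs
      have hI1 : PInv (nxt s) := pinv_nxt hI
      have ht1 : (nxt s).t = 1 := nxt_t_macro hgt
      obtain ⟨k, hk1, hk2⟩ := reach_cp (((M : ℤ) - (nxt s).T).toNat) (nxt s) hs1 ht1
        (le_refl _)
      set u := nxt^[k] (nxt s) with hu
      have hus : inS u := inS_iter hs1 k
      have huI : PInv u := pinv_iter hI1 k
      have hphi2 : Phi u ≤ Phi (nxt s) := phi_iter_le hs1 hI1 k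
      have hphiu : (Phi u).toNat ≤ v := by
        have h0 := phi_nonneg u
        have h3 := phi_nonneg s
        omega
      obtain ⟨n, hn⟩ := ih u hus huI hk1 hk2 hphiu
      refine ⟨n + (k + 1), ?_⟩
      have hstep : nxt^[k+1] s = u := by rw [Function.iterate_succ_apply, ← hu]
      rw [Function.iterate_add_apply, hstep, hn]

end BDM

namespace BDM

variable {M : ℕ}

/-- Global hitting lemma: every state in `S` reaches `init`. -/
lemma hits_init (s : St M) (hs : inS s) : ∃ n, nxt^[n] s = init M := by
  obtain ⟨h1, h2⟩ := iter_sweep (M + 1 - s.t) s (by have := s.ht1; have := s.ht2; omega)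
  set u := nxt^[M + 1 - s.t] s with hu
  have hut : ¬ u.t ≤ M := by have := s.ht1; have := s.ht2; omega
  have hus : inS u := inS_iter hs _
  have hv1 : (nxt u).t = 1 := nxt_t_macro hut
  have hvs : inS (nxt u) := inS_nxt hus
  obtain ⟨k, hk1, hk2⟩ := reach_cp (((M : ℤ) - (nxt u).T).toNat) (nxt u) hvs hv1 (le_refl _)
  set w := nxt^[k] (nxt u) with hw
  have hws : inS w := inS_iter hvs k
  have hwI : PInv w := pinv_iter (pinv_of_t1 hv1) k
  obtain ⟨n, hn⟩ := cp_reaches_init (M := M) (Phi w).toNat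
      w hws hwI hk1 hk2 (le_refl _)
  refine ⟨n + (k + (1 + (M + 1 - s.t))), ?_⟩
  rw [Function.iterate_add_apply, Function.iterate_add_apply,
    Function.iterate_add_apply, ← hu]
  simpa [← hw] using hn

/-- The action list of the deterministic trajectory. -/
def actList : ℕ → St M → List Act
  | 0, _ => []
  | n+1, s => actOf s :: actList n (nxt s)

lemma actList_length (n : ℕ) (s : St M) : (actList n s).length = n := by
  induction n generalizing s with
  | zero => rfl
  | succ n ih => simp [actList, ih]

lemma actList_noI (n : ℕ) (s : St M) : ∀ α ∈ actList n s, α ≠ .I := by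
  induction n generalizing s with
  | zero => intro α h; simp [actList] at h
  | succ n ih =>
    intro α h
    simp only [actList, List.mem_cons] at h
    rcases h with rfl | h
    · exact actOf_ne_I s
    · exact ih (nxt s) α h

lemma actList_chain (n : ℕ) (s : St M) (hs : inS s) :
    Chain s (actList n s) (nxt^[n] s) := by
  induction n generalizing s with
  | zero => exact Chain.nil s
  | succ n ih =>
    rw [Function.iterate_succ_apply]
    exact Chain.cons (step_actOf s hs) (ih (nxt s) (inS_nxt hs))

lemma chain_noI_eq : ∀ (L : List Act) (s u : St M), inS s → Chain s L u →
    (∀ α ∈ L, α ≠ .I) → u = nxt^[L.length] s ∧ L = actList L.length s := by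
  intro L
  induction L with
  | nil =>
    intro s u _ hc _
    cases hc
    exact ⟨rfl, rfl⟩
  | cons α L ih =>
    intro s u hs hc hno
    cases hc with
    | cons hstep hchain =>
      obtain ⟨hα, hu⟩ := step_det hstep (hno α List.mem_cons_self)
      subst hα
      rw [hu] at hchain
      obtain ⟨h1, h2⟩ := ih (nxt s) u (inS_nxt hs) hchain
        (fun β hβ => hno β (List.mem_cons_of_mem _ hβ))
      constructor
      · rw [List.length_cons, Function.iterate_succ_apply]
        exact h1
      · rw [List.length_cons]
        show _ = actOf s :: actList L.length (nxt s)
        rw [← h2]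

lemma chain_split : ∀ (A B : List Act) (s v : St M), Chain s (A ++ B) v →
    ∃ w, Chain s A w ∧ Chain w B v := by
  intro A
  induction A with
  | nil => intro B s v h; exact ⟨s, Chain.nil s, h⟩
  | cons α A ih =>
    intro B s v h
    rw [List.cons_append] at h
    cases h with
    | cons hstep hchain =>
      obtain ⟨w, hw1, hw2⟩ := ih B _ v hchain
      exact ⟨w, Chain.cons hstep hw1, hw2⟩

end BDM


open BDM in
/-- For every BDM state `s ∈ S` there is exactly one finite path of
feasible transitions from `s` to the initial state `s₀` avoiding actions of type
`I` and visiting `s₀` only as its final state.  Since each pair (state, action)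
determines the next state, a path from `s` is faithfully encoded by its list of
actions. -/
theorem bdm_unique_path_to_init (M q : ℕ) (hM : 1 ≤ M) (hq : 2 ≤ q)
    (s : St M) (hs : inS s) :
    ∃! L : List Act,
      Chain s L (init M) ∧ Act.I ∉ L ∧
        (∀ L₁ L₂ (u : St M), L = L₁ ++ L₂ → L₂ ≠ [] →
          Chain s L₁ u → u ≠ init M) := by
  classical
  have hex : ∃ n, nxt^[n] s = init M := hits_init s hs
  set N := Nat.find hex with hN
  have hspec : nxt^[N] s = init M := Nat.find_spec hex
  refine ⟨actList N s, ⟨?_, ?_, ?_⟩, ?_⟩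
  · have := actList_chain N s hs
    rwa [hspec] at this
  · intro hmem
    exact actList_noI N s _ hmem rfl
  · intro L₁ L₂ u hsplit hne hchain
    have hmem : ∀ α ∈ L₁, α ≠ Act.I := by
      intro α hα
      exact actList_noI N s α (by rw [hsplit]; exact List.mem_append_left _ hα)
    obtain ⟨hu, -⟩ := chain_noI_eq L₁ s u hs hchain hmem
    have hlen : L₁.length + L₂.length = N := by
      have := actList_length (M := M) N s
      rw [hsplit, List.length_append] at this
      exact this
    have hlt : L₁.length < N := by
      have : L₂.length ≠ 0 := fun h => hne (List.length_eq_zero_iff.1 h)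
      omega
    intro hinit
    exact Nat.find_min hex hlt (by rw [← hu, hinit])
  · rintro L' ⟨hc, hnoI, hthird⟩
    have hno : ∀ α ∈ L', α ≠ Act.I := by
      intro α hα hαI
      exact hnoI (hαI ▸ hα)
    obtain ⟨hu, hLeq⟩ := chain_noI_eq L' s (init M) hs hc hno
    have hNle : N ≤ L'.length := Nat.find_min' hex hu.symm
    have heq : L'.length = N := by
      by_contra hne
      have hlt : N < L'.length := lt_of_le_of_ne hNle (Ne.symm hne)
      have hsplit : L' = L'.take N ++ L'.drop N := (List.take_append_drop N L').symm
      have hdne : L'.drop N ≠ [] := by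
        intro h
        have := List.length_drop (i := N) (l := L')
        rw [h] at this
        simp at this
        omega
      obtain ⟨w, hw1, hw2⟩ := chain_split (L'.take N) (L'.drop N) s (init M)
        (by rwa [← hsplit])
      have hmem : ∀ α ∈ L'.take N, α ≠ Act.I := fun α hα =>
        hno α (List.mem_of_mem_take hα)
      obtain ⟨hweq, -⟩ := chain_noI_eq (L'.take N) s w hs hw1 hmem
      have hwlen : (L'.take N).length = N := by
        rw [List.length_take]
        omega
      have : w = init M := by
        rw [hweq, hwlen, hspec]
      exact hthird (L'.take N) (L'.drop N) w hsplit hdne hw1 this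
    rw [hLeq, heq]
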